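/- arXiv:1503.01796 — 7 statements merged into one kernel-verified Lean document; each statement's English description precedes it below -/
import Mathlib

section
/- For every natural number n, a₁(2n+1) = a₁(n) + a₂(n). -/
open Polynomial

/-- `a₁ n` : number of nonzero coefficients of `(1+x+x²)ⁿ` over `𝔽₂`. -/
noncomputable def a1 (n : ℕ) : ℕ :=
  (((1 + X + X ^ 2 : (ZMod 2)[X]) ^ n).support).card

/-- `a₂ n` : number of nonzero coefficients of `(1+x)(1+x+x²)ⁿ` over `𝔽₂`. -/
noncomputable def a2 (n : ℕ) : ℕ :=
  (((1 + X) * (1 + X + X ^ 2 : (ZMod 2)[X]) ^ n).support).card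

/-!
Over `𝔽₂` squaring is `f(x) ↦ f(x²)`, so with `P = (1+x+x²)ⁿ`
`(1+x+x²)^(2n+1) = P² (1+x²) + x P² = ((1+x) P)(x²) + x · P(x²)`.
The first summand carries the even coefficients and the second the odd ones, so the nonzero
coefficients of the left side are those of `(1+x) P` (at even places) together with those of
`P` (at odd places).
-/

namespace Polynomial

variable {R : Type*} [CommSemiring R]

theorem coeff_expand_two_add_X_mul_two_mul (f g : R[X]) (k : ℕ) :
    (expand R 2 f + X * expand R 2 g).coeff (2 * k) = f.coeff k := by
  cases k with
  | zero => simp [coeff_expand]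
  | succ k =>
    rw [coeff_add, coeff_expand_mul' two_pos, show 2 * (k + 1) = 2 * k + 1 + 1 by ring,
      coeff_X_mul, coeff_expand two_pos]
    simp [Nat.two_dvd_ne_zero.mpr (Nat.mul_add_mod_self_left 2 k 1)]

theorem coeff_expand_two_add_X_mul_two_mul_add_one (f g : R[X]) (k : ℕ) :
    (expand R 2 f + X * expand R 2 g).coeff (2 * k + 1) = g.coeff k := by
  rw [coeff_add, coeff_X_mul, coeff_expand_mul' two_pos, coeff_expand two_pos]
  simp [Nat.two_dvd_ne_zero.mpr (Nat.mul_add_mod_self_left 2 k 1)]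

theorem support_expand_two_add_X_mul (f g : R[X]) :
    (expand R 2 f + X * expand R 2 g).support =
      (f.support.disjSum g.support).map Equiv.natSumNatEquivNat.toEmbedding := by
  ext m
  obtain ⟨s, rfl⟩ := Equiv.natSumNatEquivNat.surjective m
  rw [Finset.mem_map_equiv, Equiv.symm_apply_apply, mem_support_iff]
  rcases s with k | k
  · rw [Equiv.natSumNatEquivNat_apply, Sum.elim_inl, coeff_expand_two_add_X_mul_two_mul]
    simp
  · rw [Equiv.natSumNatEquivNat_apply, Sum.elim_inr, coeff_expand_two_add_X_mul_two_mul_add_one]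
    simp

theorem card_support_expand_two_add_X_mul (f g : R[X]) :
    (expand R 2 f + X * expand R 2 g).support.card = f.support.card + g.support.card := by
  rw [support_expand_two_add_X_mul, Finset.card_map, Finset.card_disjSum]

end Polynomial

theorem one_add_X_add_X_sq_pow_two_mul_add_one (n : ℕ) :
    (1 + X + X ^ 2 : (ZMod 2)[X]) ^ (2 * n + 1) =
      expand (ZMod 2) 2 ((1 + X) * (1 + X + X ^ 2) ^ n) +
        X * expand (ZMod 2) 2 ((1 + X + X ^ 2) ^ n) := by
  have two_eq_zero : (2 : (ZMod 2)[X]) = 0 := CharP.ofNat_eq_zero _ 2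
  rw [ZMod.expand_card, ZMod.expand_card]
  linear_combination (-X * ((1 + X + X ^ 2 : (ZMod 2)[X]) ^ n) ^ 2) * two_eq_zero

theorem a1_two_mul_add_one (n : ℕ) : a1 (2 * n + 1) = a1 n + a2 n := by
  rw [a1, one_add_X_add_X_sq_pow_two_mul_add_one, card_support_expand_two_add_X_mul, add_comm,
    a1, a2]
end

section
/- For every natural number n, a₂(2n) = 2·a₁(n). -/
/-!
Over `𝔽₂` squaring is the Frobenius, so `(1 + x + x²)²ⁿ = Q(x²)` with `Q = (1 + x + x²)ⁿ`.
Multiplying `Q(x²)` by `1 + x` places the coefficient `q_k` of `Q` at both positions `2k` and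
`2k + 1`, so every nonzero coefficient of `Q` yields exactly two nonzero coefficients.
-/

open Polynomial

theorem coeff_one_add_X_mul_expand_two {R : Type*} [CommSemiring R] (f : R[X]) (m : ℕ) :
    ((1 + X) * expand R 2 f).coeff m = f.coeff (m / 2) := by
  rw [add_mul, one_mul, coeff_add]
  rcases m with _ | m
  · simp [coeff_expand]
  · rw [coeff_X_mul, coeff_expand two_pos, coeff_expand two_pos]
    rcases Nat.even_or_odd' m with ⟨k, rfl | rfl⟩
    · rw [if_neg (by omega), if_pos (by omega), zero_add]; congr 1; omega
    · rw [if_pos (by omega), if_neg (by omega), add_zero]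

theorem card_support_one_add_X_mul_expand_two {R : Type*} [CommSemiring R] (f : R[X]) :
    ((1 + X) * expand R 2 f).support.card = 2 * f.support.card := by
  conv_rhs => rw [← Finset.card_range 2, ← Finset.card_product]
  refine Finset.card_nbij' (fun m => (m % 2, m / 2)) (fun p => p.1 + 2 * p.2) ?_ ?_ ?_ ?_ <;>
    simp only [Set.MapsTo, Set.LeftInvOn, Finset.coe_product, Finset.coe_range, Set.mem_prod,
      Set.mem_Iio, Finset.mem_coe, mem_support_iff, coeff_one_add_X_mul_expand_two, Prod.forall]
  · exact fun m hm => ⟨Nat.mod_lt m two_pos, hm⟩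
  · intro b k ⟨hb, hk⟩
    rwa [show (b + 2 * k) / 2 = k by omega]
  · intro m _
    omega
  · intro b k ⟨hb, _⟩
    simp only [Prod.mk.injEq]
    omega

theorem a2_two_mul (n : ℕ) : a2 (2 * n) = 2 * a1 n := by
  rw [a2, a1, mul_comm 2 n, pow_mul, ← ZMod.expand_card, card_support_one_add_X_mul_expand_two]
end

section
/- For every natural number n, a₂(2n+1) = 2·a₁(n). -/
open Polynomial

/-!
Over `𝔽₂` we have `(1 + x)(1 + x + x²) = 1 + x³` and `g² = g(x²)`, so with `f = (1 + x + x²)ⁿ`,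
`(1 + x)(1 + x + x²)²ⁿ⁺¹ = f(x²) + x³ f(x²)`. The first summand has only even exponents and the
second only odd ones, and each has as many nonzero coefficients as `f`.
-/

namespace Polynomial

section Semiring

variable {R : Type*} [Semiring R]

theorem support_add_of_disjoint {p q : R[X]} (h : Disjoint p.support q.support) :
    (p + q).support = p.support ∪ q.support := by
  refine subset_antisymm support_add fun k hk => ?_
  rw [mem_support_iff, coeff_add]
  rcases Finset.mem_union.1 hk with hp | hq
  · rw [notMem_support_iff.1 (Finset.disjoint_left.1 h hp), add_zero]
    exact mem_support_iff.1 hp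
  · rw [notMem_support_iff.1 (Finset.disjoint_right.1 h hq), zero_add]
    exact mem_support_iff.1 hq

theorem support_mul_X_pow (f : R[X]) (n : ℕ) :
    (f * X ^ n).support = f.support.image (· + n) := by
  ext k
  simp only [Finset.mem_image, mem_support_iff, coeff_mul_X_pow']
  split_ifs with h
  · exact ⟨fun hk => ⟨k - n, hk, Nat.sub_add_cancel h⟩, by rintro ⟨m, hm, rfl⟩; simpa using hm⟩
  · simp only [ne_eq, not_true_eq_false, false_iff, not_exists, not_and]
    intro m _ hm
    omega

end Semiring

section CommSemiring

variable {R : Type*} [CommSemiring R]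

theorem support_expand {p : ℕ} (hp : 0 < p) (f : R[X]) :
    (expand R p f).support = f.support.image (p * ·) := by
  ext k
  simp only [Finset.mem_image, mem_support_iff, coeff_expand hp]
  split_ifs with h
  · exact ⟨fun hk => ⟨k / p, hk, Nat.mul_div_cancel' h⟩,
      by rintro ⟨m, hm, rfl⟩; simpa [Nat.mul_div_cancel_left m hp] using hm⟩
  · simp only [ne_eq, not_true_eq_false, false_iff, not_exists, not_and]
    rintro m _ rfl
    exact h (dvd_mul_right p m)

theorem card_support_expand_mul_one_add_X_pow {p d : ℕ} (hp : 0 < p) (hd : ¬p ∣ d)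
    (f : R[X]) : (expand R p f * (1 + X ^ d)).support.card = 2 * f.support.card := by
  have hdisj : Disjoint (expand R p f).support (expand R p f * X ^ d).support := by
    rw [support_mul_X_pow, support_expand hp, Finset.disjoint_left]
    simp only [Finset.mem_image, not_exists, not_and]
    rintro _ ⟨a, -, rfl⟩ _ ⟨b, -, rfl⟩ hab
    exact hd ((Nat.dvd_add_right (dvd_mul_right p b)).1 (hab ▸ dvd_mul_right p a))
  have hcard : (expand R p f).support.card = f.support.card := by
    rw [support_expand hp]
    exact Finset.card_image_of_injective _ (mul_right_injective₀ hp.ne')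
  rw [mul_add, mul_one, support_add_of_disjoint hdisj, Finset.card_union_of_disjoint hdisj,
    support_mul_X_pow, Finset.card_image_of_injective _ (add_left_injective d), hcard, two_mul]

end CommSemiring

theorem one_add_X_mul_one_add_X_add_X_sq {R : Type*} [CommRing R] [CharP R 2] :
    (1 + X) * (1 + X + X ^ 2 : R[X]) = 1 + X ^ 3 := by
  linear_combination (X + X ^ 2) * CharTwo.two_eq_zero (R := R[X])

end Polynomial

theorem a2_two_mul_add_one (n : ℕ) : a2 (2 * n + 1) = 2 * a1 n := by
  have hfactor : (1 + X) * (1 + X + X ^ 2 : (ZMod 2)[X]) ^ (2 * n + 1) =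
      expand (ZMod 2) 2 ((1 + X + X ^ 2) ^ n) * (1 + X ^ 3) := by
    rw [ZMod.expand_card, ← one_add_X_mul_one_add_X_add_X_sq]
    ring
  rw [a2, hfactor, card_support_expand_mul_one_add_X_pow (by norm_num) (by norm_num), a1]
end

section
/- For every natural number k, b₂(k+1) = 2·b₁(k), i.e. a₂(2^{k+1} − 1) = 2·a₁(2^k − 1). -/
open Polynomial

lemma frob_id : frobenius (ZMod 2) 2 = RingHom.id (ZMod 2) := by
  ext x
  fin_cases x <;> rfl

lemma sq_eq_expand (f : (ZMod 2)[X]) : f ^ 2 = expand (ZMod 2) 2 f := by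
  rw [← Polynomial.map_frobenius_expand (p := 2) f, frob_id, Polynomial.map_id]

lemma support_expand2 (f : (ZMod 2)[X]) :
    (expand (ZMod 2) 2 f).support = f.support.image (fun m => 2 * m) := by
  ext n
  simp only [mem_support_iff, Finset.mem_image, Polynomial.coeff_expand (by norm_num : 0 < 2)]
  constructor
  · intro h
    by_cases hd : 2 ∣ n
    · refine ⟨n / 2, by simpa [hd] using h, by omega⟩
    · simp [hd] at h
  · rintro ⟨m, hm, rfl⟩
    simpa [Nat.dvd_mul_right] using hm

lemma support_X_pow_mul (n : ℕ) (f : (ZMod 2)[X]) :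
    (X ^ n * f).support = f.support.image (fun m => n + m) := by
  ext d
  simp only [mem_support_iff, Finset.mem_image, Polynomial.coeff_X_pow_mul']
  constructor
  · intro h
    by_cases hd : n ≤ d
    · exact ⟨d - n, by simpa [hd] using h, by omega⟩
    · simp [hd] at h
  · rintro ⟨m, hm, rfl⟩
    simpa using hm

lemma support_add_disjoint {f h : (ZMod 2)[X]} (hd : Disjoint f.support h.support) :
    (f + h).support = f.support ∪ h.support := by
  ext n
  simp only [mem_support_iff, Finset.mem_union, coeff_add]
  by_cases hf : f.coeff n = 0 <;> by_cases hh : h.coeff n = 0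
  · simp [hf, hh]
  · simp [hf, hh]
  · simp [hf, hh]
  · exact (Finset.disjoint_left.mp hd (mem_support_iff.mpr hf)
      (mem_support_iff.mpr hh)).elim

theorem b2_succ (k : ℕ) : a2 (2 ^ (k + 1) - 1) = 2 * a1 (2 ^ k - 1) := by
  have hpow : 1 ≤ 2 ^ k := Nat.one_le_two_pow
  have hk : 2 ^ (k + 1) - 1 = (2 ^ k - 1) * 2 + 1 := by
    rw [pow_succ]; omega
  set q : (ZMod 2)[X] := (1 + X + X ^ 2) ^ (2 ^ k - 1) with hq
  set g : (ZMod 2)[X] := expand (ZMod 2) 2 q with hg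
  have h2 : (2 : (ZMod 2)[X]) = 0 := by
    exact_mod_cast CharP.cast_eq_zero (ZMod 2)[X] 2
  have key : (1 + X) * (1 + X + X ^ 2 : (ZMod 2)[X]) ^ (2 ^ (k + 1) - 1)
      = g + X ^ 3 * g := by
    rw [hk, pow_add, pow_mul, pow_one, ← hq]
    have : (1 + X) * (1 + X + X ^ 2 : (ZMod 2)[X]) = 1 + X ^ 3 := by
      linear_combination (X + X ^ 2 : (ZMod 2)[X]) * h2
    calc (1 + X) * ((q ^ 2 : (ZMod 2)[X]) * (1 + X + X ^ 2))
        = ((1 + X) * (1 + X + X ^ 2)) * q ^ 2 := by ring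
      _ = (1 + X ^ 3) * q ^ 2 := by rw [this]
      _ = q ^ 2 + X ^ 3 * q ^ 2 := by ring
      _ = g + X ^ 3 * g := by rw [sq_eq_expand, ← hg]
  have hgsupp : g.support = q.support.image (fun m => 2 * m) := support_expand2 q
  have hxsupp : (X ^ 3 * g).support = q.support.image (fun m => 3 + 2 * m) := by
    rw [support_X_pow_mul, hgsupp, Finset.image_image]
    rfl
  have hdisj : Disjoint g.support (X ^ 3 * g).support := by
    rw [hgsupp, hxsupp]
    rw [Finset.disjoint_left]
    rintro a ha hb
    simp only [Finset.mem_image] at ha hb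
    obtain ⟨m, -, rfl⟩ := ha
    obtain ⟨m', -, h'⟩ := hb
    omega
  have hinj1 : Set.InjOn (fun m => 2 * m) q.support := fun a _ b _ h => by
    simpa using h
  have hinj2 : Set.InjOn (fun m => 3 + 2 * m) q.support := fun a _ b _ h => by
    simp only at h; omega
  rw [a2, key, support_add_disjoint hdisj, Finset.card_union_of_disjoint hdisj,
    hgsupp, hxsupp, Finset.card_image_of_injOn hinj1, Finset.card_image_of_injOn hinj2]
  rw [a1, ← hq]
  ring
end

section
/- For every natural number k, 3·a₂(2^k − 1) = 2^{k+2} + 2·(−1)^k (as integers). -/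
open Polynomial

namespace B2Aux

lemma sq_eq_expand (q : (ZMod 2)[X]) : q ^ 2 = expand (ZMod 2) 2 q := by
  have h := Polynomial.map_frobenius_expand (p := 2) q
  rw [ZMod.frobenius_zmod, Polynomial.map_id] at h
  exact h.symm

lemma support_expand (q : (ZMod 2)[X]) :
    (expand (ZMod 2) 2 q).support = q.support.image (2 * ·) := by
  ext n
  simp only [Polynomial.mem_support_iff, Finset.mem_image, Polynomial.coeff_expand two_pos]
  constructor
  · intro h
    split_ifs at h with h2
    · obtain ⟨j, rfl⟩ := h2
      exact ⟨j, by simpa [Nat.mul_div_cancel_left] using h, by ring⟩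
    · exact absurd rfl h
  · rintro ⟨j, hj, rfl⟩
    rw [if_pos ⟨j, rfl⟩]
    simpa [Nat.mul_div_cancel_left] using hj

lemma support_X_pow_mul (q : (ZMod 2)[X]) (j : ℕ) :
    (X ^ j * q).support = q.support.image (· + j) := by
  ext n
  simp only [Polynomial.mem_support_iff, Finset.mem_image]
  rw [Polynomial.X_pow_mul, Polynomial.coeff_mul_X_pow']
  constructor
  · intro h
    split_ifs at h with h2
    · exact ⟨n - j, h, by omega⟩
    · exact absurd rfl h
  · rintro ⟨m, hm, rfl⟩
    rw [if_pos (Nat.le_add_left j m)]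
    simpa using hm

lemma support_add_disjoint {p q : (ZMod 2)[X]} (h : Disjoint p.support q.support) :
    (p + q).support = p.support ∪ q.support := by
  ext n
  simp only [Polynomial.mem_support_iff, Finset.mem_union, Polynomial.coeff_add]
  constructor
  · intro hn
    by_contra hc
    push_neg at hc
    simp [hc.1, hc.2] at hn
  · intro hn
    rcases hn with hn | hn
    · have : q.coeff n = 0 := by
        by_contra hq
        exact (Finset.disjoint_left.mp h (Polynomial.mem_support_iff.mpr hn))
          (Polynomial.mem_support_iff.mpr hq)
      simpa [this] using hn
    · have : p.coeff n = 0 := by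
        by_contra hp
        exact (Finset.disjoint_left.mp h (Polynomial.mem_support_iff.mpr hp))
          (Polynomial.mem_support_iff.mpr hn)
      simpa [this] using hn

lemma disjoint_even_odd (q r : (ZMod 2)[X]) (j : ℕ) (hj : j % 2 = 1) :
    Disjoint (expand (ZMod 2) 2 q).support (X ^ j * expand (ZMod 2) 2 r).support := by
  rw [support_expand, support_X_pow_mul, support_expand]
  rw [Finset.disjoint_left]
  rintro n hn hn'
  obtain ⟨a, -, rfl⟩ := Finset.mem_image.mp hn
  obtain ⟨m, hm, hmj⟩ := Finset.mem_image.mp hn'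
  obtain ⟨b, -, rfl⟩ := Finset.mem_image.mp hm
  omega

lemma card_sum (q r : (ZMod 2)[X]) (j : ℕ) (hj : j % 2 = 1) :
    (expand (ZMod 2) 2 q + X ^ j * expand (ZMod 2) 2 r).support.card
      = q.support.card + r.support.card := by
  rw [support_add_disjoint (disjoint_even_odd q r j hj),
    Finset.card_union_of_disjoint (disjoint_even_odd q r j hj),
    support_expand, support_X_pow_mul, support_expand,
    Finset.card_image_of_injective _ (fun a b h => by omega),
    Finset.card_image_of_injective _ (fun a b h => by omega),
    Finset.card_image_of_injective _ (fun a b h => by omega)]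

lemma two_eq_zero : (2 : (ZMod 2)[X]) = 0 := by
  exact_mod_cast CharP.cast_eq_zero ((ZMod 2)[X]) 2

lemma a2_rec (m : ℕ) : a2 (2 * m + 1) = 2 * a1 m := by
  have key : (1 + X) * (1 + X + X ^ 2 : (ZMod 2)[X]) ^ (2 * m + 1)
      = expand (ZMod 2) 2 ((1 + X + X ^ 2) ^ m)
        + X ^ 3 * expand (ZMod 2) 2 ((1 + X + X ^ 2) ^ m) := by
    rw [← sq_eq_expand]
    have h2 : (2 : (ZMod 2)[X]) = 0 := two_eq_zero
    rw [show ((1:(ZMod 2)[X]) + X + X^2)^(2*m+1) = ((1 + X + X^2)^m)^2 * (1+X+X^2) by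
      rw [← pow_mul]; ring]
    linear_combination (((1+X+X^2 : (ZMod 2)[X])^m)^2 * (X + X^2)) * h2
  rw [a2, key, card_sum _ _ 3 rfl, a1, two_mul]

lemma a1_rec (m : ℕ) : a1 (2 * m + 1) = a1 m + a2 m := by
  have key : (1 + X + X ^ 2 : (ZMod 2)[X]) ^ (2 * m + 1)
      = expand (ZMod 2) 2 ((1 + X) * (1 + X + X ^ 2) ^ m)
        + X ^ 1 * expand (ZMod 2) 2 ((1 + X + X ^ 2) ^ m) := by
    rw [← sq_eq_expand, ← sq_eq_expand]
    have h2 : (2 : (ZMod 2)[X]) = 0 := two_eq_zero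
    rw [show ((1:(ZMod 2)[X]) + X + X^2)^(2*m+1) = ((1 + X + X^2)^m)^2 * (1+X+X^2) by
      rw [← pow_mul]; ring]
    linear_combination (-(X * ((1+X+X^2 : (ZMod 2)[X])^m)^2)) * h2
  rw [a1, key, card_sum _ _ 1 rfl, a2, a1, Nat.add_comm]

lemma a1_zero : a1 0 = 1 := by
  rw [a1, pow_zero, ← Polynomial.C_1, Polynomial.support_C one_ne_zero,
    Finset.card_singleton]

lemma a2_zero : a2 0 = 2 := by
  have h : ((1 + X) * (1 + X + X ^ 2 : (ZMod 2)[X]) ^ 0) = C 1 * X ^ 1 + C 1 * X ^ 0 := by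
    simp only [pow_zero, mul_one, map_one, pow_one]
    ring
  rw [a2, h]
  exact Polynomial.card_support_binomial one_ne_zero one_ne_zero one_ne_zero

lemma both (k : ℕ) :
    (3 : ℤ) * (a1 (2 ^ k - 1) : ℤ) = 2 ^ (k + 2) - (-1) ^ k ∧
    (3 : ℤ) * (a2 (2 ^ k - 1) : ℤ) = 2 ^ (k + 2) + 2 * (-1) ^ k := by
  induction k with
  | zero => simp [a1_zero, a2_zero]
  | succ k ih =>
    obtain ⟨ih1, ih2⟩ := ih
    have hpow : (1:ℕ) ≤ 2 ^ k := Nat.one_le_two_pow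
    have hrw : 2 ^ (k + 1) - 1 = 2 * (2 ^ k - 1) + 1 := by
      rw [pow_succ]; omega
    rw [hrw, a1_rec, a2_rec]
    push_cast
    have e1 : ((-1 : ℤ)) ^ (k + 1) = -(-1) ^ k := by ring
    have e2 : (2 : ℤ) ^ (k + 1 + 2) = 2 * 2 ^ (k + 2) := by ring
    rw [e1, e2]
    constructor
    · linarith
    · linarith

end B2Aux

theorem b2_closed_form (k : ℕ) :
    (3 : ℤ) * (a2 (2 ^ k - 1) : ℤ) = 2 ^ (k + 2) + 2 * (-1) ^ k := by
  exact (B2Aux.both k).2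
end

section
/- Refined key recurrence (keeping track of individual coefficients): let p be a prime, P, Q ∈ 𝔽_p[x], 0 ≤ i ≤ p−1, n a natural number, and s a nonzero element of 𝔽_p. Then the number of exponents j with coeff(Q·P^{pn+i}, j) = s equals Σ_{α=0}^{p−1} #{j : coeff(R_α(Q·P^i)·P^n, j) = s}. -/
open Polynomial

/-! Over `𝔽_p` the Frobenius gives `P ^ (p * n + i) = P ^ i * P(x ^ p) ^ n`, so the coefficient of
`x ^ (p * q + α)` in `Q * P ^ (p * n + i)` is the coefficient of `x ^ q` in `R_α(Q * P ^ i) * P ^ n`.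
Sorting the exponents `j` with coefficient `s` by their residue `α` modulo `p` then splits the count
into the `p` counts on the right. -/

/-- The `α`-th section `R_α(F)` of a polynomial `F` over `ZMod p`:
the coefficient of `x^j` in `R_α(F)` is the coefficient of `x^{p·j+α}` in `F`. -/
noncomputable def sect (p : ℕ) (α : ℕ) (F : (ZMod p)[X]) : (ZMod p)[X] :=
  ∑ j ∈ Finset.range (F.natDegree + 1), Polynomial.C (F.coeff (p * j + α)) * X ^ j

/-- `a_Q(n) = Σ_j val(coeff(Q·Pⁿ, j))`, i.e. `Q·Pⁿ mod p` evaluated at `x = 1` with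
coefficients read as integers in `{0, …, p-1}`. -/
noncomputable def aQ (p : ℕ) (P Q : (ZMod p)[X]) (n : ℕ) : ℕ :=
  ∑ j ∈ (Q * P ^ n).support, ((Q * P ^ n).coeff j).val

theorem Set.ncard_eq_sum_ncard_mul_add {p : ℕ} (hp : 0 < p) {S : Set ℕ} (hS : S.Finite) :
    S.ncard = ∑ a ∈ Finset.range p, {q | p * q + a ∈ S}.ncard := by
  have hdecomp : S = ⋃ a ∈ (Finset.range p : Set ℕ), (p * · + a) '' {q | p * q + a ∈ S} := by
    ext j
    simp only [Set.mem_iUnion, Set.mem_image, Set.mem_ofPred_eq, Finset.coe_range, Set.mem_Iio]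
    constructor
    · intro hj
      exact ⟨j % p, Nat.mod_lt j hp, j / p, by rwa [Nat.div_add_mod], Nat.div_add_mod j p⟩
    · rintro ⟨a, -, q, hq, rfl⟩
      exact hq
  have hinj (a : ℕ) : Function.Injective (p * · + a) := fun q r h ↦
    Nat.eq_of_mul_eq_mul_left hp (Nat.add_right_cancel h)
  have hdisj : (Finset.range p : Set ℕ).PairwiseDisjoint
      fun a ↦ (p * · + a) '' {q | p * q + a ∈ S} := by
    rintro a ha b hb hab
    simp only [Finset.coe_range, Set.mem_Iio] at ha hb
    refine Set.disjoint_left.2 ?_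
    rintro _ ⟨q, -, rfl⟩ ⟨r, -, h⟩
    apply hab
    simpa [Nat.mul_add_mod, Nat.mod_eq_of_lt ha, Nat.mod_eq_of_lt hb] using
      (congrArg (· % p) h).symm
  conv_lhs => rw [hdecomp]
  rw [Set.Finite.ncard_biUnion (Finset.finite_toSet _) ?_ hdisj, finsum_mem_coe_finset]
  · exact Finset.sum_congr rfl fun a _ ↦ Set.ncard_image_of_injective _ (hinj a)
  · exact fun a _ ↦ (hS.preimage (hinj a).injOn).image _

theorem coeff_sect {p : ℕ} (hp : 0 < p) (α : ℕ) (F : (ZMod p)[X]) (j : ℕ) :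
    (sect p α F).coeff j = F.coeff (p * j + α) := by
  rw [sect, finsetSum_coeff]
  simp only [coeff_C_mul_X_pow, Finset.sum_ite_eq, Finset.mem_range, ite_eq_left_iff, not_lt]
  intro hj
  exact (coeff_eq_zero_of_natDegree_lt (by nlinarith)).symm

theorem coeff_mul_expand_mul_add {p : ℕ} (hp : 0 < p) {α : ℕ} (hα : α < p) (F G : (ZMod p)[X])
    (q : ℕ) : (F * expand (ZMod p) p G).coeff (p * q + α) = (sect p α F * G).coeff q := by
  induction G using Polynomial.induction_on' with
  | add G H hG hH => simp only [map_add, mul_add, coeff_add, hG, hH]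
  | monomial k c =>
    simp only [← C_mul_X_pow_eq_monomial, map_mul, expand_C, map_pow, expand_X, ← pow_mul,
      mul_left_comm _ (C c), coeff_C_mul, coeff_mul_X_pow', coeff_sect hp]
    have hle : p * k ≤ p * q + α ↔ k ≤ q := ⟨fun h ↦ by nlinarith, fun h ↦ by nlinarith⟩
    by_cases hk : k ≤ q
    · obtain ⟨d, rfl⟩ := Nat.exists_eq_add_of_le hk
      rw [if_pos (hle.2 hk), if_pos hk, Nat.add_sub_cancel_left, mul_add, add_assoc,
        Nat.add_sub_cancel_left]
    · rw [if_neg (mt hle.1 hk), if_neg hk]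

theorem refined_key_recurrence_step_general (p : ℕ) (hp : p.Prime) (P Q : (ZMod p)[X])
    (i : ℕ) (n : ℕ) (s : ZMod p) (hs : s ≠ 0) :
    {j : ℕ | (Q * P ^ (p * n + i)).coeff j = s}.ncard =
      ∑ α ∈ Finset.range p, {j : ℕ | (sect p α (Q * P ^ i) * P ^ n).coeff j = s}.ncard := by
  have : Fact p.Prime := ⟨hp⟩
  have hfrob : Q * P ^ (p * n + i) = Q * P ^ i * expand (ZMod p) p (P ^ n) := by
    rw [ZMod.expand_card, ← pow_mul, pow_add, mul_comm p n]; ring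
  have hfin : {j | (Q * P ^ (p * n + i)).coeff j = s}.Finite :=
    (Q * P ^ (p * n + i)).support.finite_toSet.subset fun _ hj ↦ mem_support_iff.2 (hj ▸ hs)
  rw [Set.ncard_eq_sum_ncard_mul_add hp.pos hfin, hfrob]
  refine Finset.sum_congr rfl fun α hα ↦ ?_
  simp only [Set.mem_ofPred_eq, coeff_mul_expand_mul_add hp.pos (Finset.mem_range.1 hα)]

theorem refined_key_recurrence_step (p : ℕ) (hp : p.Prime) (P Q : (ZMod p)[X])
    (i : ℕ) (hi : i < p) (n : ℕ) (s : ZMod p) (hs : s ≠ 0) :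
    {j : ℕ | (Q * P ^ (p * n + i)).coeff j = s}.ncard =
      ∑ α ∈ Finset.range p, {j : ℕ | (sect p α (Q * P ^ i) * P ^ n).coeff j = s}.ncard :=
  refined_key_recurrence_step_general p hp P Q i n s hs
end

section
/- Rationality of the generating function: let p be a prime and P ∈ 𝔽_p[x]. Define c(k) := Σ_{j≥0} val(coeff(P^{p^k−1}, j)), where val : 𝔽_p → {0,…,p−1} ⊂ ℤ is the canonical lift. Then the formal power series Σ_{k≥0} c(k)·t^k ∈ ℚ⟦t⟧ is a rational function: there exist polynomials q, r ∈ ℚ[t] with constant term of r nonzero such that r·Σ_{k≥0} c(k)·t^k = q in ℚ⟦t⟧. -/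
/-!
Over `𝔽_p`, Frobenius gives `P ^ (p ^ (k + 1) - 1) = P ^ (p ^ k - 1) * R(x ^ p ^ k)` with
`R = P ^ (p - 1)`. For `t < p ^ k`, call the coefficients of `P ^ (p ^ k - 1)` at
`t, t + p ^ k, t + 2 p ^ k, …` a column; by the degree bound it has `deg P + 1` entries. The
identity says that the column at `a * p ^ k + t` one level up is obtained from the column at `t` by
a map depending only on the digit `a`. Summing over columns, `c(k) = (Lᵏ w)(s₀)` for the linear
transfer operator `L` on functions on the finitely many column states, the digit-sum weight `w` and
the initial state `s₀`. By Cayley–Hamilton `c` then satisfies a linear recurrence, and the reversed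
characteristic polynomial of `L` clears the denominator of its generating function.
-/

open Polynomial

/-- `c(k) = Σ_j val(coeff(P^{pᵏ-1}, j))`, i.e. `P^{pᵏ-1} mod p` with coefficients lifted
to `{0, …, p-1} ⊂ ℤ` and then evaluated at `x = 1`. -/
noncomputable def cSeq (p : ℕ) (P : (ZMod p)[X]) (k : ℕ) : ℕ :=
  ∑ j ∈ (P ^ (p ^ k - 1)).support, ((P ^ (p ^ k - 1)).coeff j).val

open Finset

namespace PowerSeries

theorem exists_reverse_mul_mk_eq_of_sum_coeff_mul_eq_zero {R : Type*} [CommRing R] (χ : R[X])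
    (c : ℕ → R)
    (hc : ∀ k, ∑ i ∈ range (χ.natDegree + 1), χ.coeff i * c (k + i) = 0) :
    ∃ q : R[X], (χ.reverse : R⟦X⟧) * mk c = q := by
  set n := χ.natDegree
  refine ⟨trunc n (χ.reverse * mk c), ?_⟩
  ext m
  rw [Polynomial.coeff_coe, coeff_trunc]
  split_ifs with hm
  · rfl
  replace hm := not_lt.1 hm
  calc coeff m ((χ.reverse : R⟦X⟧) * mk c)
      = ∑ i ∈ range (m + 1), χ.reverse.coeff i * c (m - i) := by
        simp [coeff_mul, Finset.Nat.sum_antidiagonal_eq_sum_range_succ_mk]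
    _ = ∑ i ∈ range (n + 1), χ.reverse.coeff i * c (m - i) := by
        refine (sum_subset (range_subset_range.2 (by omega)) fun i _ hi => ?_).symm
        rw [Polynomial.coeff_eq_zero_of_natDegree_lt, zero_mul]
        exact (reverse_natDegree_le χ).trans_lt (by simpa using hi)
    _ = ∑ i ∈ range (n + 1), χ.coeff i * c (m - n + i) := by
        rw [← sum_range_reflect]
        refine sum_congr rfl fun i hi => ?_
        have hi : i ≤ n := mem_range_succ_iff.1 hi
        rw [coeff_reverse, revAt_le (by omega)]
        congr 2 <;> omega
    _ = 0 := hc _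

end PowerSeries

theorem Polynomial.sum_coeff_mul_map_pow_eq_zero {R A : Type*} [CommSemiring R] [Semiring A]
    [Algebra R A] {a : A} {χ : R[X]} (hχ : aeval a χ = 0) (φ : A →ₗ[R] R) (k : ℕ) :
    ∑ i ∈ range (χ.natDegree + 1), χ.coeff i * φ (a ^ (k + i)) = 0 := by
  have h := congr_arg φ (congr_arg (a ^ k * ·) hχ)
  simpa [aeval_eq_sum_range, mul_sum, pow_add] using h

theorem Finset.sum_range_mul_eq_sum_sum {M : Type*} [AddCommMonoid M] (f : ℕ → M) (m n : ℕ) :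
    ∑ j ∈ range (m * n), f j = ∑ i ∈ range m, ∑ t ∈ range n, f (i * n + t) := by
  induction m with
  | zero => simp
  | succ m ih => rw [sum_range_succ, ← ih, Nat.succ_mul, sum_range_add]

section Transfer

variable {S R : Type*} [CommSemiring R]

noncomputable def transferOp (b : ℕ) (M : ℕ → S → S) : Module.End R (S → R) :=
  ∑ a ∈ range b, LinearMap.funLeft R R (M a)

theorem transferOp_apply (b : ℕ) (M : ℕ → S → S) (w : S → R) (v : S) :
    transferOp b M w v = ∑ a ∈ range b, w (M a v) := by
  simp [transferOp, LinearMap.sum_apply, LinearMap.funLeft_apply]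

theorem sum_range_pow_eq_transferOp_pow_apply (b : ℕ) (M : ℕ → S → S) (s : ℕ → ℕ → S)
    (hs : ∀ k a t, a < b → t < b ^ k → s (k + 1) (a * b ^ k + t) = M a (s k t))
    (w : S → R) (k : ℕ) :
    ∑ t ∈ range (b ^ k), w (s k t) = (transferOp b M ^ k) w (s 0 0) := by
  induction k generalizing w with
  | zero => simp
  | succ k ih =>
    calc ∑ t ∈ range (b ^ (k + 1)), w (s (k + 1) t)
        = ∑ a ∈ range b, ∑ t ∈ range (b ^ k), w (M a (s k t)) := by
          rw [pow_succ', sum_range_mul_eq_sum_sum]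
          refine sum_congr rfl fun a ha => sum_congr rfl fun t ht => ?_
          rw [hs k a t (mem_range.1 ha) (mem_range.1 ht)]
      _ = ∑ t ∈ range (b ^ k), transferOp b M w (s k t) := by
          simp only [transferOp_apply]
          exact sum_comm
      _ = (transferOp b M ^ (k + 1)) w (s 0 0) := by
          rw [ih, pow_succ, Module.End.mul_apply]

end Transfer

theorem Polynomial.coeff_mul_expand_add_mul {R : Type*} [CommSemiring R] (f g : R[X]) {m t : ℕ}
    (ht : t < m) (j : ℕ) :
    (f * expand R m g).coeff (t + j * m) =
      ∑ u ∈ range (j + 1), f.coeff (t + (j - u) * m) * g.coeff u := by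
  induction g using Polynomial.induction_on' with
  | add g h hg hh => simp [mul_add, hg, hh, sum_add_distrib]
  | monomial v c =>
    rw [expand_monomial, ← C_mul_X_pow_eq_monomial, mul_left_comm, coeff_C_mul, coeff_mul_X_pow']
    simp only [coeff_monomial, mul_ite, mul_zero, sum_ite_eq, mem_range, Nat.lt_succ_iff]
    by_cases hvj : v ≤ j
    · rw [if_pos (by nlinarith), if_pos hvj, Nat.sub_mul, Nat.add_sub_assoc (by nlinarith),
        mul_comm]
    · rw [if_neg (by nlinarith), if_neg hvj]

namespace ZMod

variable {p : ℕ} [Fact p.Prime]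

theorem expand_prime_pow (f : (ZMod p)[X]) (k : ℕ) : expand (ZMod p) (p ^ k) f = f ^ p ^ k := by
  have h := map_iterateFrobenius_expand p f k
  rwa [iterateFrobenius_eq_pow, frobenius_zmod, ← RingHom.one_def, one_pow, RingHom.one_def,
    Polynomial.map_id] at h

theorem pow_prime_pow_succ_sub_one (P : (ZMod p)[X]) (k : ℕ) :
    P ^ (p ^ (k + 1) - 1) = P ^ (p ^ k - 1) * expand (ZMod p) (p ^ k) (P ^ (p - 1)) := by
  have hp : 1 ≤ p := (Fact.out : p.Prime).one_le
  rw [expand_prime_pow, ← pow_mul, ← pow_add]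
  congr 1
  zify [hp, Nat.one_le_pow _ _ hp]
  ring

end ZMod

noncomputable section Columns

variable {p : ℕ} (P : (ZMod p)[X])

def columnState (k t : ℕ) : Fin (P.natDegree + 1) → ZMod p :=
  fun i => (P ^ (p ^ k - 1)).coeff (t + i * p ^ k)

/-- The coefficients at `a, a + p, a + 2p, …` of `v(x) * P ^ (p - 1)`, where the state `v` is read
as a polynomial of degree `≤ deg P`. -/
def columnStep (a : ℕ) (v : Fin (P.natDegree + 1) → ZMod p) : Fin (P.natDegree + 1) → ZMod p :=
  fun i => ∑ u ∈ range (a + i * p + 1),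
    (if h : a + i * p - u < P.natDegree + 1 then v ⟨_, h⟩ else 0) * (P ^ (p - 1)).coeff u

theorem natDegree_pow_pow_sub_one_lt [NeZero p] (k : ℕ) :
    (P ^ (p ^ k - 1)).natDegree < (P.natDegree + 1) * p ^ k := by
  have hpk : 0 < p ^ k := Nat.pos_of_ne_zero (pow_ne_zero _ (NeZero.ne p))
  calc (P ^ (p ^ k - 1)).natDegree ≤ (p ^ k - 1) * P.natDegree := natDegree_pow_le
    _ < (P.natDegree + 1) * p ^ k := by
      rw [add_one_mul]
      nlinarith [Nat.sub_le (p ^ k) 1]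

theorem coeff_pow_pow_sub_one_add_mul [NeZero p] (k t n : ℕ) :
    (P ^ (p ^ k - 1)).coeff (t + n * p ^ k) =
      if h : n < P.natDegree + 1 then columnState P k t ⟨n, h⟩ else 0 := by
  split_ifs with h
  · rfl
  refine coeff_eq_zero_of_natDegree_lt ((natDegree_pow_pow_sub_one_lt P k).trans_le ?_)
  nlinarith [Nat.mul_le_mul_right (p ^ k) (not_lt.1 h)]

theorem columnState_succ [Fact p.Prime] {k t : ℕ} (ht : t < p ^ k) (a : ℕ) :
    columnState P (k + 1) (a * p ^ k + t) = columnStep P a (columnState P k t) := by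
  funext i
  have hidx : a * p ^ k + t + i * p ^ (k + 1) = t + (a + i * p) * p ^ k := by ring
  change (P ^ (p ^ (k + 1) - 1)).coeff (a * p ^ k + t + i * p ^ (k + 1)) = _
  rw [hidx, ZMod.pow_prime_pow_succ_sub_one, coeff_mul_expand_add_mul _ _ ht, columnStep]
  exact sum_congr rfl fun u _ => by rw [coeff_pow_pow_sub_one_add_mul]

theorem cSeq_eq_sum_columnState [NeZero p] (k : ℕ) :
    cSeq p P k = ∑ t ∈ range (p ^ k), ∑ i, (columnState P k t i).val := by
  have hsupp : (P ^ (p ^ k - 1)).support ⊆ range ((P.natDegree + 1) * p ^ k) := fun j hj =>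
    mem_range.2 ((le_natDegree_of_mem_supp j hj).trans_lt (natDegree_pow_pow_sub_one_lt P k))
  rw [cSeq, sum_subset hsupp fun j _ hj => by rw [notMem_support_iff.1 hj, ZMod.val_zero],
    sum_range_mul_eq_sum_sum, sum_comm]
  refine sum_congr rfl fun t _ => ?_
  simp only [columnState, add_comm t]
  exact (Fin.sum_univ_eq_sum_range (fun i => ((P ^ (p ^ k - 1)).coeff (i * p ^ k + t)).val) _).symm

end Columns

theorem genfun_rational (p : ℕ) (hp : p.Prime) (P : (ZMod p)[X]) :
    ∃ q r : Polynomial ℚ, r.coeff 0 ≠ 0 ∧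
      (r : PowerSeries ℚ) * PowerSeries.mk (fun k => (cSeq p P k : ℚ)) =
        (q : PowerSeries ℚ) := by
  have := Fact.mk hp
  let L : Module.End ℚ ((Fin (P.natDegree + 1) → ZMod p) → ℚ) := transferOp p (columnStep P)
  let w : (Fin (P.natDegree + 1) → ZMod p) → ℚ := fun v => ∑ i, ((v i).val : ℚ)
  let φ : Module.End ℚ (_ → ℚ) →ₗ[ℚ] ℚ := LinearMap.proj (columnState P 0 0) ∘ₗ LinearMap.applyₗ w
  have hc : (fun k => (cSeq p P k : ℚ)) = fun k => φ (L ^ k) := by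
    funext k
    rw [cSeq_eq_sum_columnState]
    push_cast
    exact sum_range_pow_eq_transferOp_pow_apply p _ _ (fun _ a _ _ ht => columnState_succ P ht a)
      w k
  obtain ⟨q, hq⟩ := PowerSeries.exists_reverse_mul_mk_eq_of_sum_coeff_mul_eq_zero L.charpoly
    (fun k => φ (L ^ k)) (sum_coeff_mul_map_pow_eq_zero (LinearMap.aeval_self_charpoly L) φ)
  refine ⟨q, L.charpoly.reverse, by simp [coeff_zero_reverse, L.charpoly_monic.leadingCoeff], ?_⟩
  rwa [hc]
end
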